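/- For any finite simple graph G with at least one vertex such that c*(G) > c(G), and any ℓ ≥ 1, the disjoint union of ℓ copies of G satisfies c*(G^{+ℓ}) > c(G^{+ℓ}). -/

import Mathlib

open scoped BigOperators ComplexOrder
open Matrix

noncomputable section

namespace ZeroError

variable {V W : Type*}

/-- The independence number of a simple graph: the maximum cardinality of a set of
pairwise non-adjacent vertices. -/
def indepNum [Fintype V] (G : SimpleGraph V) : ℕ :=
  sSup {n | ∃ s : Finset V, s.card = n ∧ ∀ u ∈ s, ∀ v ∈ s, u ≠ v → ¬ G.Adj u v}

/-- The strong product of two simple graphs. -/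
def strongProd (G : SimpleGraph V) (H : SimpleGraph W) : SimpleGraph (V × W) where
  Adj x y := x ≠ y ∧ (x.1 = y.1 ∨ G.Adj x.1 y.1) ∧ (x.2 = y.2 ∨ H.Adj x.2 y.2)
  symm := by
    constructor
    rintro x y ⟨hne, h1, h2⟩
    exact ⟨hne.symm, h1.imp Eq.symm (fun a => a.symm), h2.imp Eq.symm (fun a => a.symm)⟩
  loopless := by constructor; rintro x ⟨hne, -⟩; exact hne rfl

/-- The n-fold strong power of a simple graph. -/
def strongPow (G : SimpleGraph V) (n : ℕ) : SimpleGraph (Fin n → V) where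
  Adj u v := u ≠ v ∧ ∀ i, u i = v i ∨ G.Adj (u i) (v i)
  symm := by
    constructor
    rintro u v ⟨hne, h⟩
    exact ⟨hne.symm, fun i => (h i).imp Eq.symm (fun a => a.symm)⟩
  loopless := by constructor; rintro u ⟨hne, -⟩; exact hne rfl

/-- `copies G ℓ` is the disjoint union `G^{+ℓ}` of ℓ copies of `G`. -/
def copies (G : SimpleGraph V) (ℓ : ℕ) : SimpleGraph (V × Fin ℓ) where
  Adj x y := x.2 = y.2 ∧ G.Adj x.1 y.1
  symm := by constructor; rintro x y ⟨h1, h2⟩; exact ⟨h1.symm, h2.symm⟩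
  loopless := by constructor; rintro x ⟨-, h⟩; exact G.irrefl h

/-- The Cartesian product `G □ K_t` of a graph with the complete graph on `t` vertices. -/
def cartProdK (G : SimpleGraph V) (t : ℕ) : SimpleGraph (V × Fin t) where
  Adj x y := (G.Adj x.1 y.1 ∧ x.2 = y.2) ∨ (x.1 = y.1 ∧ x.2 ≠ y.2)
  symm := by
    constructor
    rintro x y (⟨h1, h2⟩ | ⟨h1, h2⟩)
    · exact Or.inl ⟨h1.symm, h2.symm⟩
    · exact Or.inr ⟨h1.symm, h2.symm⟩
  loopless := by constructor; rintro x (⟨h, -⟩ | ⟨-, h⟩); exacts [G.irrefl h, h rfl]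

/-- The chromatic number: the least number of colors of a proper coloring. -/
def chromNum [Fintype V] (G : SimpleGraph V) : ℕ :=
  sInf {m | ∃ c : V → Fin m, ∀ u v, G.Adj u v → c u ≠ c v}

/-- The entanglement-assisted independence number `α*(G)`. -/
def qIndepNum [Fintype V] (G : SimpleGraph V) : ℕ :=
  sSup {m | ∃ (d : ℕ) (ρ : Matrix (Fin d) (Fin d) ℂ)
      (σ : Fin m → V → Matrix (Fin d) (Fin d) ℂ),
    ρ.PosSemidef ∧ ρ.trace = 1 ∧ (∀ i u, (σ i u).PosSemidef) ∧
    (∀ i, ∑ u, σ i u = ρ) ∧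
    ∀ i j u v, i ≠ j → (u = v ∨ G.Adj u v) → σ i u * σ j v = 0}

/-- The entanglement-assisted chromatic number `χ*(G)`. -/
def qChromNum [Fintype V] (G : SimpleGraph V) : ℕ :=
  sInf {m | ∃ (d : ℕ) (ρ : Matrix (Fin d) (Fin d) ℂ)
      (σ : V → Fin m → Matrix (Fin d) (Fin d) ℂ),
    ρ.PosSemidef ∧ ρ.trace = 1 ∧ (∀ x i, (σ x i).PosSemidef) ∧
    (∀ x, ∑ i, σ x i = ρ) ∧
    ∀ x y i, G.Adj x y → σ x i * σ y i = 0}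

/-- The partial trace onto the k-th tensor factor:
`(Tr_{B_{-k}} M)_{a,b} = Σ M_{s,t}` over tuples `s, t` with `s k = a`, `t k = b` and
`s r = t r` for all `r ≠ k`. -/
def ptraceK {d ℓ : ℕ} (k : Fin ℓ)
    (M : Matrix (Fin ℓ → Fin d) (Fin ℓ → Fin d) ℂ) : Matrix (Fin d) (Fin d) ℂ :=
  Matrix.of fun a b => ∑ s : Fin ℓ → Fin d, ∑ t : Fin ℓ → Fin d,
    if s k = a ∧ t k = b ∧ ∀ r, r ≠ k → s r = t r then M s t else 0

/-- The entanglement-assisted compound independence number `α*_{1,ℓ}(G)` with ℓ receivers. -/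
def qCompoundNum [Fintype V] (G : SimpleGraph V) (ℓ : ℕ) : ℕ :=
  sSup {m | ∃ (d : ℕ) (ρ : Matrix (Fin ℓ → Fin d) (Fin ℓ → Fin d) ℂ)
      (σ : Fin m → V → Matrix (Fin ℓ → Fin d) (Fin ℓ → Fin d) ℂ),
    ρ.PosSemidef ∧ ρ.trace = 1 ∧ (∀ i u, (σ i u).PosSemidef) ∧
    (∀ i, ∑ u, σ i u = ρ) ∧
    ∀ (k : Fin ℓ) i j u v, i ≠ j → (u = v ∨ G.Adj u v) →
      ptraceK k (σ i u) * ptraceK k (σ j v) = 0}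

/-- The Shannon capacity `c(G) = sup_{n ≥ 1} (1/n) log₂ α(G^{⊠n})`. -/
def shannonCap [Fintype V] (G : SimpleGraph V) : ℝ :=
  ⨆ n : ℕ+, Real.logb 2 (indepNum (strongPow G (n : ℕ))) / ((n : ℕ) : ℝ)

/-- The entangled Shannon capacity `c*(G) = sup_{n ≥ 1} (1/n) log₂ α*(G^{⊠n})`. -/
def qShannonCap [Fintype V] (G : SimpleGraph V) : ℝ :=
  ⨆ n : ℕ+, Real.logb 2 (qIndepNum (strongPow G (n : ℕ))) / ((n : ℕ) : ℝ)

/-- The entanglement-assisted compound Shannon capacity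
`c*_{1,ℓ}(G) = sup_{n ≥ 1} (1/n) log₂ α*_{1,ℓ}(G^{⊠n})`. -/
def qCompoundCap [Fintype V] (G : SimpleGraph V) (ℓ : ℕ) : ℝ :=
  ⨆ n : ℕ+, Real.logb 2 (qCompoundNum (strongPow G (n : ℕ)) ℓ) / ((n : ℕ) : ℝ)

/-- The edge-clique cover number `θ_e(G)`: the least number of cliques covering all edges. -/
def edgeCliqueCoverNum [Fintype V] (G : SimpleGraph V) : ℕ :=
  sInf {n | ∃ F : Finset (Finset V), F.card = n ∧ (∀ c ∈ F, G.IsClique (c : Set V)) ∧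
    ∀ u v, G.Adj u v → ∃ c ∈ F, u ∈ c ∧ v ∈ c}

/-- `θ'_e(G)`: the edge-clique cover number plus the number of isolated vertices. -/
def thetaPrime [Fintype V] (G : SimpleGraph V) : ℕ :=
  edgeCliqueCoverNum G + {v : V | ∀ u, ¬ G.Adj v u}.ncard

/-- `f` is an orthogonal representation of `G` in dimension `d`. -/
def IsOrthRep (G : SimpleGraph V) (d : ℕ) (f : V → EuclideanSpace ℂ (Fin d)) : Prop :=
  (∀ v, ‖f v‖ = 1) ∧ ∀ u v, G.Adj u v → inner ℂ (f u) (f v) = (0 : ℂ)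

/-- The orthogonal rank `ξ(G)`. -/
def orthRank (G : SimpleGraph V) : ℕ :=
  sInf {d | ∃ f : V → EuclideanSpace ℂ (Fin d), IsOrthRep G d f}

/-- Vertices of the quarter orthogonality graph `Γ_k`: ±1-vectors of length `k+1`
with first coordinate 1 and an even number of -1 entries. -/
def QOVertex (k : ℕ) : Type :=
  {u : Fin (k + 1) → ℤ // (∀ i, u i = 1 ∨ u i = -1) ∧ u 0 = 1 ∧
    Even ((Finset.univ.filter fun i => u i = -1).card)}

instance (k : ℕ) : Fintype (QOVertex k) :=
  Fintype.ofInjective (fun u : QOVertex k => fun i => decide (u.val i = 1))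
    (by
      intro u v h
      apply Subtype.ext; funext i
      have hi := congrFun h i
      rcases u.prop.1 i with h1 | h1 <;> rcases v.prop.1 i with h2 | h2 <;>
        simp [h1, h2] at hi ⊢)

/-- The quarter orthogonality graph `Γ_k`. -/
def quarterOrthGraph (k : ℕ) : SimpleGraph (QOVertex k) where
  Adj u v := u ≠ v ∧ ∑ i, u.val i * v.val i = 0
  symm := by
    constructor
    rintro u v ⟨hne, h⟩
    refine ⟨hne.symm, ?_⟩
    rw [← h]
    exact Finset.sum_congr rfl fun i _ => mul_comm _ _
  loopless := by constructor; rintro u ⟨hne, -⟩; exact hne rfl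

/-- Vertices of the orthogonality graph `Ω_k`: all ±1-vectors of length `k`. -/
def PMVertex (k : ℕ) : Type :=
  {u : Fin k → ℤ // ∀ i, u i = 1 ∨ u i = -1}

instance (k : ℕ) : Fintype (PMVertex k) :=
  Fintype.ofInjective (fun u : PMVertex k => fun i => decide (u.val i = 1))
    (by
      intro u v h
      apply Subtype.ext; funext i
      have hi := congrFun h i
      rcases u.prop i with h1 | h1 <;> rcases v.prop i with h2 | h2 <;>
        simp [h1, h2] at hi ⊢)

/-- The orthogonality graph `Ω_k`. -/
def orthGraph (k : ℕ) : SimpleGraph (PMVertex k) where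
  Adj u v := u ≠ v ∧ ∑ i, u.val i * v.val i = 0
  symm := by
    constructor
    rintro u v ⟨hne, h⟩
    refine ⟨hne.symm, ?_⟩
    rw [← h]
    exact Finset.sum_congr rfl fun i _ => mul_comm _ _
  loopless := by constructor; rintro u ⟨hne, -⟩; exact hne rfl


/-! An independent set of `(G^{+ℓ})^{⊠n}` splits into `ℓ^n` classes according to the sequence of
copies its vertices lie in, and each class projects injectively onto an independent set of
`G^{⊠n}`; hence `α((G^{+ℓ})^{⊠n}) ≤ ℓ^n α(G^{⊠n})`. Conversely, an entangled strategy for `G^{⊠n}`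
can be played inside each of the `ℓ^n` copies of `G^{⊠n}` in `(G^{+ℓ})^{⊠n}`, and messages sent
in different copies never conflict, so `α*((G^{+ℓ})^{⊠n}) ≥ ℓ^n α*(G^{⊠n})`. Taking `log₂`,
dividing by `n` and passing to suprema,
`c(G^{+ℓ}) ≤ log₂ ℓ + c(G) < log₂ ℓ + c*(G) ≤ c*(G^{+ℓ})`.
The suprema are finite because `α*(H) ≤ |V(H)|`. -/

section TraceInequalities

open scoped MatrixOrder

variable {n : Type*} [Fintype n] {A B : Matrix n n ℂ}

lemma _root_.Matrix.PosSemidef.trace_mul_nonneg (hA : A.PosSemidef) (hB : B.PosSemidef) :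
    0 ≤ (A * B).trace := by
  classical
  obtain ⟨C, rfl⟩ := CStarAlgebra.nonneg_iff_eq_star_mul_self.mp hA.nonneg
  rw [Matrix.mul_assoc, trace_mul_comm, star_eq_conjTranspose]
  exact (hB.mul_mul_conjTranspose_same C).trace_nonneg

lemma _root_.Matrix.IsHermitian.trace_mul_self_nonneg (hA : A.IsHermitian) :
    0 ≤ (A * A).trace := by
  nth_rw 1 [← hA.eq]
  exact (posSemidef_conjTranspose_mul_self A).trace_nonneg

lemma _root_.Matrix.IsHermitian.trace_mul_self_pos (hA : A.IsHermitian) (hA0 : A ≠ 0) :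
    0 < (A * A).trace := by
  nth_rw 1 [← hA.eq]
  exact (posSemidef_conjTranspose_mul_self A).trace_nonneg.lt_of_ne
    (Ne.symm (trace_conjTranspose_mul_self_eq_zero_iff.not.mpr hA0))

end TraceInequalities

/- With `S u = ∑ i, σ i u`, expand `0 ≤ ∑ u, Tr((ρ - S u)²)`: the cross terms sum to
`2 |ι| Tr(ρ²)`, while orthogonality and `σ i u ≤ ρ` give `∑ u, Tr((S u)²) ≤ |ι| Tr(ρ²)`. -/
open Finset in
lemma card_le_card_of_orthogonal_decompositions {n ι W : Type*} [Fintype n] [Fintype ι]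
    [Fintype W] {ρ : Matrix n n ℂ} {σ : ι → W → Matrix n n ℂ}
    (hρ : ρ.IsHermitian) (hρ0 : ρ ≠ 0) (hσ : ∀ i u, (σ i u).PosSemidef)
    (hsum : ∀ i, ∑ u, σ i u = ρ) (horth : ∀ i j u, i ≠ j → σ i u * σ j u = 0) :
    Fintype.card ι ≤ Fintype.card W := by
  classical
  set t := (ρ * ρ).trace
  set S : W → Matrix n n ℂ := fun u => ∑ i, σ i u
  have hσ_le : ∀ i u, (σ i u * σ i u).trace ≤ (σ i u * ρ).trace := by
    intro i u
    have hrest : ρ - σ i u = ∑ v ∈ univ.erase u, σ i v := by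
      rw [← hsum i, ← add_sum_erase _ _ (mem_univ u), add_sub_cancel_left]
    have h := (hσ i u).trace_mul_nonneg (hrest ▸ posSemidef_sum _ fun v _ => hσ i v)
    rwa [Matrix.mul_sub, trace_sub, sub_nonneg] at h
  have hS_sq : ∀ u, (S u * S u).trace = ∑ i, (σ i u * σ i u).trace := by
    intro u
    simp only [S, sum_mul_sum, trace_sum]
    exact sum_congr rfl fun i _ => sum_eq_single i
      (fun j _ hji => by rw [horth i j u hji.symm, trace_zero]) (by simp)
  have hS_ρ : ∑ u, (S u * ρ).trace = Fintype.card ι * t := by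
    simp only [S, sum_mul, trace_sum]
    rw [sum_comm]
    simp [← trace_sum, ← sum_mul, hsum, t]
  have hS_herm : ∀ u, (S u).IsHermitian := fun u =>
    (posSemidef_sum _ fun i _ => hσ i u).isHermitian
  have hsq_le : ∑ u, (S u * S u).trace ≤ Fintype.card ι * t := by
    calc ∑ u, (S u * S u).trace = ∑ u, ∑ i, (σ i u * σ i u).trace :=
          sum_congr rfl fun u _ => hS_sq u
      _ ≤ ∑ u, ∑ i, (σ i u * ρ).trace :=
          sum_le_sum fun u _ => sum_le_sum fun i _ => hσ_le i u
      _ = Fintype.card ι * t := by simpa only [S, sum_mul, trace_sum] using hS_ρ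
  have hdev :
      0 ≤ Fintype.card W * t - 2 * (Fintype.card ι * t) + ∑ u, (S u * S u).trace := by
    have h := sum_nonneg fun u (_ : u ∈ univ) => (hρ.sub (hS_herm u)).trace_mul_self_nonneg
    simp only [sub_mul, mul_sub, trace_sub, sum_sub_distrib, trace_mul_comm ρ] at h
    simp only [sum_const, card_univ, nsmul_eq_mul, hS_ρ] at h
    linear_combination h
  have hmain : (Fintype.card ι : ℂ) * t ≤ Fintype.card W * t := by
    linear_combination hdev + hsq_le
  exact_mod_cast le_of_mul_le_mul_right hmain (hρ.trace_mul_self_pos hρ0)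

section IndependenceNumber

variable [Fintype V] (G : SimpleGraph V)

lemma indepNum_eq_simpleGraph_indepNum : indepNum G = G.indepNum := by
  simp only [indepNum, SimpleGraph.indepNum, SimpleGraph.isNIndepSet_iff, and_comm]
  rfl

lemma indepNum_le_card : indepNum G ≤ Fintype.card V := by
  obtain ⟨s, -, hs⟩ := G.exists_isNIndepSet_indepNum
  rw [indepNum_eq_simpleGraph_indepNum, ← hs]
  exact s.card_le_univ

lemma indepNum_pos [Nonempty V] : 0 < indepNum G := by
  rw [indepNum_eq_simpleGraph_indepNum]
  have h : G.IsIndepSet ({Classical.arbitrary V} : Finset V) := by simp [SimpleGraph.IsIndepSet]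
  exact (Finset.card_singleton _).symm.trans_le h.card_le_indepNum

end IndependenceNumber

section QuantumIndependenceNumber

variable [Fintype V]

-- `qIndepNum G` is by definition the supremum of the `m` with `HasQIndepStrategy G (Fin m)`.
def HasQIndepStrategy (G : SimpleGraph V) (ι : Type*) [Fintype ι] : Prop :=
  ∃ (d : ℕ) (ρ : Matrix (Fin d) (Fin d) ℂ) (σ : ι → V → Matrix (Fin d) (Fin d) ℂ),
    ρ.PosSemidef ∧ ρ.trace = 1 ∧ (∀ i u, (σ i u).PosSemidef) ∧
    (∀ i, ∑ u, σ i u = ρ) ∧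
    ∀ i j u v, i ≠ j → (u = v ∨ G.Adj u v) → σ i u * σ j v = 0

variable {G : SimpleGraph V} {ι κ : Type*} [Fintype ι] [Fintype κ]

lemma HasQIndepStrategy.card_le (h : HasQIndepStrategy G ι) :
    Fintype.card ι ≤ Fintype.card V := by
  obtain ⟨d, ρ, σ, hρ, htr, hσ, hsum, horth⟩ := h
  exact card_le_card_of_orthogonal_decompositions hρ.isHermitian (by rintro rfl; simp at htr)
    hσ hsum fun i j u hij => horth i j u u hij (Or.inl rfl)

lemma HasQIndepStrategy.of_equiv (e : ι ≃ κ) (h : HasQIndepStrategy G ι) :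
    HasQIndepStrategy G κ := by
  obtain ⟨d, ρ, σ, hρ, htr, hσ, hsum, horth⟩ := h
  exact ⟨d, ρ, fun k => σ (e.symm k), hρ, htr, fun k => hσ _, fun k => hsum _,
    fun k k' u v hkk' => horth _ _ u v (e.symm.injective.ne hkk')⟩

lemma hasQIndepStrategy_of_subsingleton [Nonempty V] [Subsingleton ι] :
    HasQIndepStrategy G ι := by
  classical
  refine ⟨1, 1, fun _ => Pi.single (Classical.arbitrary V) 1, PosSemidef.one, by simp,
    fun _ u => ?_, fun _ => by simp, fun i j _ _ hij => absurd (Subsingleton.elim i j) hij⟩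
  rcases eq_or_ne u (Classical.arbitrary V) with rfl | hu
  · simpa using PosSemidef.one
  · simpa [hu] using PosSemidef.zero

lemma bddAbove_hasQIndepStrategy : BddAbove {m | HasQIndepStrategy G (Fin m)} :=
  ⟨Fintype.card V, fun m hm => by simpa using hm.card_le⟩

lemma qIndepNum_le_card : qIndepNum G ≤ Fintype.card V :=
  csSup_le' fun m (hm : HasQIndepStrategy G (Fin m)) => by simpa using hm.card_le

lemma HasQIndepStrategy.card_le_qIndepNum (h : HasQIndepStrategy G ι) :
    Fintype.card ι ≤ qIndepNum G :=
  le_csSup bddAbove_hasQIndepStrategy (h.of_equiv (Fintype.equivFin ι))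

lemma qIndepNum_pos [Nonempty V] : 0 < qIndepNum G :=
  (hasQIndepStrategy_of_subsingleton (ι := Unit)).card_le_qIndepNum

lemma hasQIndepStrategy_qIndepNum [Nonempty V] : HasQIndepStrategy G (Fin (qIndepNum G)) :=
  Nat.sSup_mem ⟨0, hasQIndepStrategy_of_subsingleton⟩ bddAbove_hasQIndepStrategy

end QuantumIndependenceNumber

section DisjointUnion

variable {G : SimpleGraph V} {ℓ n : ℕ}

lemma strongPow_copies_eq_or_adj_iff {u v : Fin n → V × Fin ℓ} :
    u = v ∨ (strongPow (copies G ℓ) n).Adj u v ↔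
      Prod.snd ∘ u = Prod.snd ∘ v ∧
        (Prod.fst ∘ u = Prod.fst ∘ v ∨ (strongPow G n).Adj (Prod.fst ∘ u) (Prod.fst ∘ v)) := by
  constructor
  · rintro (rfl | ⟨-, hadj⟩)
    · exact ⟨rfl, Or.inl rfl⟩
    have hsnd : Prod.snd ∘ u = Prod.snd ∘ v := funext fun k => by
      rcases hadj k with h | h
      exacts [congrArg Prod.snd h, h.1]
    refine ⟨hsnd, or_iff_not_imp_left.mpr fun hfst => ⟨hfst, fun k => ?_⟩⟩
    exact (hadj k).imp (congrArg Prod.fst) And.right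
  · rintro ⟨hsnd, hfst | ⟨hne, hadj⟩⟩
    · exact Or.inl (funext fun k => Prod.ext (congrFun hfst k) (congrFun hsnd k))
    refine Or.inr ⟨fun h => hne (congrArg (Prod.fst ∘ ·) h), fun k => ?_⟩
    exact (hadj k).imp (fun h => Prod.ext h (congrFun hsnd k)) fun h => ⟨congrFun hsnd k, h⟩

variable [Fintype V]

lemma indepNum_strongPow_copies_le (G : SimpleGraph V) (ℓ n : ℕ) :
    indepNum (strongPow (copies G ℓ) n) ≤ ℓ ^ n * indepNum (strongPow G n) := by
  classical
  obtain ⟨s, hs, hcard⟩ := (strongPow (copies G ℓ) n).exists_isNIndepSet_indepNum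
  have hfiber : ∀ c : Fin n → Fin ℓ,
      (s.filter fun u => Prod.snd ∘ u = c).card ≤ indepNum (strongPow G n) := by
    intro c
    have hinj : Set.InjOn (fun u : Fin n → V × Fin ℓ => Prod.fst ∘ u)
        ↑(s.filter fun u => Prod.snd ∘ u = c) := by
      intro u hu v hv huv
      rw [Finset.coe_filter] at hu hv
      exact funext fun k => Prod.ext (congrFun huv k) (congrFun (hu.2.trans hv.2.symm) k)
    rw [← Finset.card_image_of_injOn hinj, indepNum_eq_simpleGraph_indepNum]
    refine SimpleGraph.IsIndepSet.card_le_indepNum ?_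
    simp only [Finset.coe_image, Finset.coe_filter]
    rintro _ ⟨u, hu, rfl⟩ _ ⟨v, hv, rfl⟩ hne hadj
    have huv := strongPow_copies_eq_or_adj_iff.mpr ⟨hu.2.trans hv.2.symm, Or.inr hadj⟩
    exact hs hu.1 hv.1 (fun h => hne (h ▸ rfl)) (huv.resolve_left fun h => hne (h ▸ rfl))
  calc indepNum (strongPow (copies G ℓ) n)
      = ∑ c : Fin n → Fin ℓ, (s.filter fun u => Prod.snd ∘ u = c).card := by
        rw [indepNum_eq_simpleGraph_indepNum, ← hcard]
        exact Finset.card_eq_sum_card_fiberwise fun _ _ => Finset.mem_univ _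
    _ ≤ ℓ ^ n * indepNum (strongPow G n) := by
        refine (Finset.sum_le_sum fun c _ => hfiber c).trans_eq ?_
        simp

-- Run the given strategy inside the copy of `G^{⊠n}` named by the message's copy sequence.
lemma HasQIndepStrategy.strongPow_copies {ι : Type*} [Fintype ι]
    (h : HasQIndepStrategy (strongPow G n) ι) :
    HasQIndepStrategy (strongPow (copies G ℓ) n) ((Fin n → Fin ℓ) × ι) := by
  classical
  obtain ⟨d, ρ, σ, hρ, htr, hσ, hsum, horth⟩ := h
  refine ⟨d, ρ, fun ci u => if Prod.snd ∘ u = ci.1 then σ ci.2 (Prod.fst ∘ u) else 0,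
    hρ, htr, fun ci u => ?_, fun ci => ?_, ?_⟩
  · dsimp only
    split_ifs
    exacts [hσ _ _, PosSemidef.zero]
  · rw [← hsum ci.2, ← (Equiv.arrowProdEquivProdArrow _ _ _).symm.sum_comp,
      Fintype.sum_prod_type]
    simp [Function.comp_def]
  · rintro ⟨c, i⟩ ⟨c', j⟩ u v hne huv
    obtain ⟨hsnd, hfst⟩ := strongPow_copies_eq_or_adj_iff.mp huv
    dsimp only
    split_ifs with hc hc'
    · exact horth i j _ _ (fun hij => hne (by rw [← hc, ← hc', hsnd, hij])) hfst
    all_goals simp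

lemma qIndepNum_strongPow_copies_ge [Nonempty V] (G : SimpleGraph V) (ℓ n : ℕ) :
    ℓ ^ n * qIndepNum (strongPow G n) ≤ qIndepNum (strongPow (copies G ℓ) n) := by
  simpa using (hasQIndepStrategy_qIndepNum.strongPow_copies (ℓ := ℓ)).card_le_qIndepNum

end DisjointUnion

section Capacity

open Real

lemma logb_two_natCast_le {a b : ℕ} (h : a ≤ b) : logb 2 a ≤ logb 2 b := by
  rcases Nat.eq_zero_or_pos a with rfl | ha
  · rw [Nat.cast_zero, logb_zero]
    exact div_nonneg (log_natCast_nonneg b) (log_nonneg one_le_two)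
  · exact logb_le_logb_of_le one_lt_two (by exact_mod_cast ha) (by exact_mod_cast h)

lemma logb_two_pow_mul_div {ℓ b n : ℕ} (hℓ : 0 < ℓ) (hb : 0 < b) (hn : n ≠ 0) :
    logb 2 ((ℓ ^ n * b : ℕ) : ℝ) / n = logb 2 ℓ + logb 2 b / n := by
  push_cast
  rw [logb_mul (by positivity) (by positivity), logb_pow, add_div,
    mul_div_cancel_left₀ _ (by positivity)]

variable {a b : ℕ+ → ℕ} {ℓ : ℕ}

lemma bddAbove_logb_div_of_le_pow (C : ℕ) (h : ∀ n : ℕ+, a n ≤ C ^ (n : ℕ)) :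
    BddAbove (Set.range fun n : ℕ+ => logb 2 (a n) / (n : ℕ)) := by
  refine ⟨logb 2 C, Set.forall_mem_range.mpr fun n => ?_⟩
  rw [div_le_iff₀ (by positivity), mul_comm, ← logb_pow]
  exact_mod_cast logb_two_natCast_le (h n)

lemma iSup_logb_div_le_of_le_pow_mul (hℓ : 0 < ℓ)
    (hb_bdd : BddAbove (Set.range fun n : ℕ+ => logb 2 (b n) / (n : ℕ)))
    (hb : ∀ n, 0 < b n) (hab : ∀ n : ℕ+, a n ≤ ℓ ^ (n : ℕ) * b n) :
    ⨆ n : ℕ+, logb 2 (a n) / (n : ℕ) ≤ logb 2 ℓ + ⨆ n : ℕ+, logb 2 (b n) / (n : ℕ) :=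
  ciSup_le fun n => calc
    logb 2 (a n) / (n : ℕ) ≤ logb 2 ((ℓ ^ (n : ℕ) * b n : ℕ) : ℝ) / (n : ℕ) :=
      div_le_div_of_nonneg_right (logb_two_natCast_le (hab n)) (Nat.cast_nonneg _)
    _ = logb 2 ℓ + logb 2 (b n) / (n : ℕ) := logb_two_pow_mul_div hℓ (hb n) n.ne_zero
    _ ≤ logb 2 ℓ + ⨆ n : ℕ+, logb 2 (b n) / (n : ℕ) := by
      gcongr
      exact le_ciSup hb_bdd n

lemma add_iSup_logb_div_le_of_pow_mul_le (hℓ : 0 < ℓ)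
    (ha_bdd : BddAbove (Set.range fun n : ℕ+ => logb 2 (a n) / (n : ℕ)))
    (hb : ∀ n, 0 < b n) (hab : ∀ n : ℕ+, ℓ ^ (n : ℕ) * b n ≤ a n) :
    logb 2 ℓ + ⨆ n : ℕ+, logb 2 (b n) / (n : ℕ) ≤ ⨆ n : ℕ+, logb 2 (a n) / (n : ℕ) := by
  rw [← le_sub_iff_add_le']
  refine ciSup_le fun n => le_sub_iff_add_le'.mpr ?_
  calc logb 2 ℓ + logb 2 (b n) / (n : ℕ)
      = logb 2 ((ℓ ^ (n : ℕ) * b n : ℕ) : ℝ) / (n : ℕ) :=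
        (logb_two_pow_mul_div hℓ (hb n) n.ne_zero).symm
    _ ≤ logb 2 (a n) / (n : ℕ) :=
        div_le_div_of_nonneg_right (logb_two_natCast_le (hab n)) (Nat.cast_nonneg _)
    _ ≤ ⨆ n : ℕ+, logb 2 (a n) / (n : ℕ) := le_ciSup ha_bdd n

end Capacity

/-- if `c*(G) > c(G)` then `c*(G^{+ℓ}) > c(G^{+ℓ})` for every `ℓ ≥ 1`. -/
theorem qCap_disjoint_union_gt {V : Type} [Fintype V] [Nonempty V] (G : SimpleGraph V)
    (h : shannonCap G < qShannonCap G) (ℓ : ℕ) (hℓ : 1 ≤ ℓ) :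
    shannonCap (copies G ℓ) < qShannonCap (copies G ℓ) := by
  have : Nonempty (V × Fin ℓ) := ⟨(Classical.arbitrary V, ⟨0, hℓ⟩)⟩
  calc shannonCap (copies G ℓ) ≤ Real.logb 2 ℓ + shannonCap G :=
        iSup_logb_div_le_of_le_pow_mul hℓ
          (bddAbove_logb_div_of_le_pow (Fintype.card V) fun _ =>
            (indepNum_le_card _).trans_eq (by simp))
          (fun _ => indepNum_pos _) fun n => indepNum_strongPow_copies_le G ℓ n
    _ < Real.logb 2 ℓ + qShannonCap G := by gcongr
    _ ≤ qShannonCap (copies G ℓ) :=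
        add_iSup_logb_div_le_of_pow_mul_le hℓ
          (bddAbove_logb_div_of_le_pow (Fintype.card (V × Fin ℓ)) fun _ =>
            qIndepNum_le_card.trans_eq (by simp))
          (fun _ => qIndepNum_pos) fun n => qIndepNum_strongPow_copies_ge G ℓ n

end ZeroError
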